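/- arXiv:2401.02533 — 6 statements merged into one kernel-verified Lean document; each statement's English description precedes it below -/
import Mathlib

section
/- In the abstract anomaly setting (U a group, β : G → Aut(U), V : G² → U with β(g₁)β(g₂) = Ad_{V(g₁,g₂)}β(g₁g₂) as automorphisms of U), suppose β is replaced by β̃(g) = β(g) ∘ Ad_{U(g)} for some function 𝒰 : G → U, and correspondingly Ṽ(g₁,g₂) = β(g₁)(𝒰(g₁)) · V(g₁,g₂) · β(g₁g₂)(𝒰(g₂)·𝒰(g₁g₂)⁻¹). If the associated ω(g₁,g₂,g₃) = V(g₁,g₂)V(g₁g₂,g₃)V(g₁,g₂g₃)⁻¹ β(g₁)(V(g₂,g₃))⁻¹ is central and β-invariant, then ω̃(g₁,g₂,g₃) = Ṽ(g₁,g₂)Ṽ(g₁g₂,g₃)Ṽ(g₁,g₂g₃)⁻¹ β̃(g₁)(Ṽ(g₂,g₃))⁻¹ equals ω(g₁,g₂,g₃) for all g₁,g₂,g₃ ∈ G. -/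
/-- Independence of the anomaly 3-cocycle under the change β̃(g) = β(g) ∘ Ad_{𝒰(g)}:
with Ṽ(g₁,g₂) = β(g₁)(𝒰(g₁)) V(g₁,g₂) β(g₁g₂)(𝒰(g₂) 𝒰(g₁g₂)⁻¹), the associated
3-cocycle ω̃ equals ω, provided ω is central and β-invariant. -/
theorem anomaly_cocycle_independent_of_beta {G : Type*} [Group G] {U : Type*} [Group U]
    (β : G → (U ≃* U)) (V : G → G → U) (𝒰 : G → U)
    (hβ : ∀ g₁ g₂ : G, ∀ u : U,
      β g₁ (β g₂ u) = V g₁ g₂ * β (g₁ * g₂) u * (V g₁ g₂)⁻¹)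
    (ω : G → G → G → U)
    (hω : ∀ g₁ g₂ g₃ : G,
      ω g₁ g₂ g₃ = V g₁ g₂ * V (g₁ * g₂) g₃ * (V g₁ (g₂ * g₃))⁻¹ * (β g₁ (V g₂ g₃))⁻¹)
    (hcentral : ∀ g₁ g₂ g₃ : G, ∀ u : U, Commute (ω g₁ g₂ g₃) u)
    (hfixed : ∀ g h₁ h₂ h₃ : G, β g (ω h₁ h₂ h₃) = ω h₁ h₂ h₃)
    (Vt : G → G → U)
    (hVt : ∀ g₁ g₂ : G,
      Vt g₁ g₂ = β g₁ (𝒰 g₁) * V g₁ g₂ * β (g₁ * g₂) (𝒰 g₂ * (𝒰 (g₁ * g₂))⁻¹))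
    (ωt : G → G → G → U)
    (hωt : ∀ g₁ g₂ g₃ : G,
      ωt g₁ g₂ g₃ = Vt g₁ g₂ * Vt (g₁ * g₂) g₃ * (Vt g₁ (g₂ * g₃))⁻¹
        * (β g₁ (𝒰 g₁ * Vt g₂ g₃ * (𝒰 g₁)⁻¹))⁻¹) :
    ∀ g₁ g₂ g₃ : G, ωt g₁ g₂ g₃ = ω g₁ g₂ g₃ := by
  intro g₁ g₂ g₃
  have key : ωt g₁ g₂ g₃ =
      (β g₁ (𝒰 g₁) * V g₁ g₂ * β (g₁ * g₂) (𝒰 g₂) * (V g₁ g₂)⁻¹) * ω g₁ g₂ g₃ *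
      (β g₁ (𝒰 g₁) * V g₁ g₂ * β (g₁ * g₂) (𝒰 g₂) * (V g₁ g₂)⁻¹)⁻¹ := by
    rw [hωt, hVt g₁ g₂, hVt (g₁ * g₂) g₃, hVt g₁ (g₂ * g₃), hVt g₂ g₃, hω]
    simp only [map_mul, map_inv, mul_inv_rev, inv_inv]
    simp only [hβ g₁ g₂, hβ g₁ (g₂ * g₃)]
    simp only [← mul_assoc g₁ g₂ g₃]
    group
  rw [key, ← (hcentral g₁ g₂ g₃ (β g₁ (𝒰 g₁) * V g₁ g₂ * β (g₁ * g₂) (𝒰 g₂) * (V g₁ g₂)⁻¹)).eq]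
  group
end

section
/- Let G be a group with two normal subgroups N₊ and N₋ such that N₊ ∩ N₋ = Z and G = N₋ N₊ (every element factors as a product of an element of N₋ and an element of N₊). Let α : H → G be a group homomorphism from a group H, and β : H → N₊ a function (not necessarily a homomorphism) with α(h)β(h)⁻¹ ∈ N₋ for all h. Then for all g, h ∈ H, the element β(g)β(h)β(gh)⁻¹ lies in Z. -/
/-- Key algebraic step in defining the anomaly cocycle: let N₊, N₋ be normal
subgroups of G with G = N₋N₊, let α : H →* G be a homomorphism, and β : H → N₊ a
function with α(h)β(h)⁻¹ ∈ N₋ for all h. Then β(g)β(h)β(gh)⁻¹ ∈ Z = N₊ ∩ N₋. -/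
theorem beta_failure_lands_in_intersection {G H : Type*} [Group G] [Group H]
    (Nplus Nminus : Subgroup G) [Nplus.Normal] [Nminus.Normal]
    (Z : Subgroup G) (hZ : Z = Nplus ⊓ Nminus)
    (hfact : ∀ x : G, ∃ n ∈ Nminus, ∃ m ∈ Nplus, x = n * m)
    (α : H →* G) (β : H → G)
    (hβplus : ∀ h : H, β h ∈ Nplus)
    (hβminus : ∀ h : H, α h * (β h)⁻¹ ∈ Nminus) :
    ∀ g h : H, β g * β h * (β (g * h))⁻¹ ∈ Z := by
  intro g h
  rw [hZ, Subgroup.mem_inf]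
  constructor
  · exact mul_mem (mul_mem (hβplus g) (hβplus h)) (Nplus.inv_mem (hβplus (g * h)))
  · have hg := hβminus g
    have hh := hβminus h
    have hgh := hβminus (g * h)
    -- conjugate of (α h * (β h)⁻¹) by β g is in Nminus
    have hc : β g * (α h * (β h)⁻¹) * (β g)⁻¹ ∈ Nminus :=
      Subgroup.Normal.conj_mem ‹Nminus.Normal› _ hh (β g)
    have key : β g * β h * (β (g * h))⁻¹ =
        (β g * (α h * (β h)⁻¹) * (β g)⁻¹)⁻¹ * (α g * (β g)⁻¹)⁻¹ *
          (α (g * h) * (β (g * h))⁻¹) := by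
      simp [map_mul]
      group
    rw [key]
    exact mul_mem (mul_mem (Nminus.inv_mem hc) (Nminus.inv_mem hg)) hgh
end

section
/- Let A be a unital C*-algebra and for each j ∈ ℤ and r ≥ 0 let f_j(·, r) : A → ℝ≥0 be a seminorm with f_j(1, r) = 0, f_j(a, r) ≤ ‖a‖, and f_j(ab, r) ≤ (3/2)(‖a‖ f_j(b,r) + ‖b‖ f_j(a,r)) for all a,b ∈ A. Let h : [0,1] → A be continuous with each h(t) anti-self-adjoint, f_0(h(t), r) ≤ f(r) for all t and some function f, and let U solve dU/ds = U h, U(0) = 1. Then for all s ∈ [0,1] and r ≥ 0, f_0(U(s), r) ≤ (3s/2) f(r) · exp((3/2)∫₀ˢ ‖h(t)‖ dt) ≤ (3/2) f(r) exp((3/2)‖h‖). -/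
/-!
Writing `U s = 1 + ∫₀ˢ U h`, a continuous seminorm can be moved inside the integral (Jensen),
and the approximate Leibniz rule bounds the integrand by `(3/2) (f r + ‖h t‖ F₀(U t))`, because
`‖U t‖ ≤ 1`: for anti-self-adjoint `h` the product `U U⋆` has derivative `U h U⋆ + U h⋆ U⋆ = 0`.
This is a linear integral inequality for `t ↦ F₀(U t)`, and Gronwall's lemma in integral form
gives the exponential bound.
-/

open MeasureTheory Set Real

section Integral

variable {E : Type*} [NormedAddCommGroup E] [NormedSpace ℝ E]

theorem Seminorm.map_integral_le [CompleteSpace E] {α : Type*} [MeasurableSpace α]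
    {μ : Measure α} [IsFiniteMeasure μ] (p : Seminorm ℝ E) (hp : Continuous p) {g : α → E}
    (hg : Integrable g μ) (hpg : Integrable (fun x => p (g x)) μ) :
    p (∫ x, g x ∂μ) ≤ ∫ x, p (g x) ∂μ := by
  rcases eq_zero_or_neZero μ with rfl | _
  · simp
  calc p (∫ x, g x ∂μ) = μ.real univ * p (⨍ x, g x ∂μ) := by
        rw [← measure_smul_average, map_smul_eq_mul, Real.norm_of_nonneg measureReal_nonneg]
    _ ≤ μ.real univ * ⨍ x, p (g x) ∂μ := by
        gcongr
        exact p.convexOn.map_average_le hp.continuousOn isClosed_univ (by simp) hg hpg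
    _ = ∫ x, p (g x) ∂μ := by rw [← smul_eq_mul, measure_smul_average]

theorem Seminorm.map_intervalIntegral_le [CompleteSpace E] (p : Seminorm ℝ E)
    (hp : Continuous p) {g : ℝ → E} {a b : ℝ} (hab : a ≤ b) (hg : IntervalIntegrable g volume a b)
    (hpg : IntervalIntegrable (fun t => p (g t)) volume a b) :
    p (∫ t in a..b, g t) ≤ ∫ t in a..b, p (g t) := by
  rw [intervalIntegral.integral_of_le hab, intervalIntegral.integral_of_le hab]
  exact p.map_integral_le hp hg.1 hpg.1

theorem ContinuousOn.continuousOn_intervalIntegral {f : ℝ → E} {a b : ℝ} (hab : a ≤ b)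
    (hf : ContinuousOn f (Icc a b)) : ContinuousOn (fun u => ∫ x in a..u, f x) (Icc a b) := by
  rw [← uIcc_of_le hab] at hf ⊢
  exact intervalIntegral.continuousOn_primitive_interval hf.integrableOn_uIcc

theorem ContinuousOn.hasDerivAt_intervalIntegral [CompleteSpace E] {f : ℝ → E} {a b t : ℝ}
    (hf : ContinuousOn f (Icc a b)) (ht : t ∈ Ioo a b) :
    HasDerivAt (fun u => ∫ x in a..u, f x) (f t) t :=
  intervalIntegral.integral_hasDerivAt_right
    ((hf.mono (Icc_subset_Icc_right ht.2.le)).intervalIntegrable_of_Icc ht.1.le)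
    ((hf.mono Ioo_subset_Icc_self).stronglyMeasurableAtFilter isOpen_Ioo t ht)
    (hf.continuousAt (Icc_mem_nhds ht.1 ht.2))

end Integral

theorem intervalIntegral.integral_norm_le_mul {E : Type*} [NormedAddCommGroup E] {f : ℝ → E}
    {a b M : ℝ} (hab : a ≤ b) (hf : ∀ t ∈ Ioc a b, ‖f t‖ ≤ M) :
    ∫ t in a..b, ‖f t‖ ≤ M * (b - a) := by
  have := norm_integral_le_of_norm_le_const (a := a) (b := b) (f := fun t => ‖f t‖)
    fun t ht => by simpa [uIoc_of_le hab] using hf t (uIoc_of_le hab ▸ ht)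
  rw [Real.norm_eq_abs, abs_of_nonneg (sub_nonneg.2 hab), abs_le] at this
  exact this.2

/-- Gronwall's inequality in integral form. -/
theorem le_mul_exp_integral_of_le_add_integral {g k : ℝ → ℝ} {a b c : ℝ} (hab : a ≤ b)
    (hc : 0 ≤ c) (hg : ContinuousOn g (Icc a b)) (hk : ContinuousOn k (Icc a b))
    (hk₀ : ∀ t ∈ Icc a b, 0 ≤ k t)
    (hle : ∀ t ∈ Icc a b, g t ≤ c * (t - a) + ∫ u in a..t, k u * g u) :
    g b ≤ c * (b - a) * exp (∫ u in a..b, k u) := by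
  set K : ℝ → ℝ := fun t => ∫ u in a..t, k u
  set φ : ℝ → ℝ := fun t => c * (t - a) + ∫ u in a..t, k u * g u
  have hK₀ : ∀ t ∈ Icc a b, 0 ≤ K t := fun t ht =>
    intervalIntegral.integral_nonneg ht.1 fun u hu => hk₀ u ⟨hu.1, hu.2.trans ht.2⟩
  -- integrating factor: `(φ e^{-K})' ≤ c`
  have hmono : MonotoneOn (fun t => c * (t - a) - φ t * exp (-K t)) (Icc a b) := by
    refine monotoneOn_of_hasDerivWithinAt_nonneg (convex_Icc a b)
      (f' := fun t => c * (1 - exp (-K t)) + k t * (φ t - g t) * exp (-K t)) ?_ ?_ ?_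
    · have := (hk.mul hg).continuousOn_intervalIntegral hab
      have := hk.continuousOn_intervalIntegral hab
      fun_prop
    · intro t ht
      rw [interior_Icc] at ht
      have hφ : HasDerivAt φ (c * 1 + k t * g t) t :=
        (((hasDerivAt_id t).sub_const a).const_mul c).add
          ((hk.mul hg).hasDerivAt_intervalIntegral ht)
      have hD := (((hasDerivAt_id t).sub_const a).const_mul c).sub
        (hφ.mul (hk.hasDerivAt_intervalIntegral ht).neg.exp)
      refine (hD.congr_deriv ?_).hasDerivWithinAt
      simp only [Pi.neg_apply]
      ring
    · intro t ht
      rw [interior_Icc] at ht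
      have hgφ : g t ≤ φ t := hle t (Ioo_subset_Icc_self ht)
      have hexp : exp (-K t) ≤ 1 :=
        exp_le_one_iff.2 (neg_nonpos.2 (hK₀ t (Ioo_subset_Icc_self ht)))
      exact add_nonneg (mul_nonneg hc (sub_nonneg.2 hexp))
        (mul_nonneg (mul_nonneg (hk₀ t (Ioo_subset_Icc_self ht)) (sub_nonneg.2 hgφ))
          (exp_pos _).le)
  have hφb : φ b * exp (-K b) ≤ c * (b - a) := by
    have := hmono ⟨le_rfl, hab⟩ ⟨hab, le_rfl⟩ hab
    simp only [φ, K, sub_self, mul_zero, intervalIntegral.integral_same, add_zero, neg_zero,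
      exp_zero, mul_one] at this
    linarith
  calc g b ≤ φ b := hle b ⟨hab, le_rfl⟩
    _ = φ b * exp (-K b) * exp (K b) := by
        rw [mul_assoc, ← exp_add, neg_add_cancel, exp_zero, mul_one]
    _ ≤ c * (b - a) * exp (K b) := by gcongr

theorem CStarRing.norm_le_one_of_mul_star_self_eq_one {A : Type*} [NormedRing A] [StarRing A]
    [CStarRing A] {u : A} (hu : u * star u = 1) : ‖u‖ ≤ 1 := by
  have hu_sq : ‖u‖ * ‖u‖ = ‖(1 : A)‖ := by rw [← norm_self_mul_star, hu]
  have hone : ‖(1 : A)‖ * ‖(1 : A)‖ = ‖(1 : A)‖ := by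
    rw [← norm_self_mul_star, star_one, mul_one]
  have hone_le : ‖(1 : A)‖ ≤ 1 := by nlinarith [norm_nonneg (1 : A)]
  nlinarith [norm_nonneg u]

theorem mul_star_self_eq_one_of_hasDerivAt {A : Type*} [NormedRing A] [NormedAlgebra ℝ A]
    [StarRing A] [StarModule ℝ A] [ContinuousStar A] {h U : ℝ → A} {T : ℝ}
    (hh : ∀ t ∈ Icc 0 T, star (h t) = -h t) (hU₀ : U 0 = 1)
    (hU : ∀ t ∈ Icc 0 T, HasDerivAt U (U t * h t) t) :
    ∀ t ∈ Icc 0 T, U t * star (U t) = 1 := by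
  intro t ht
  have := constant_of_has_deriv_right_zero (f := fun t => U t * star (U t)) (fun x hx => ?_)
    (fun x hx => ?_) t ht
  · simpa [hU₀] using this
  · exact ((hU x hx).continuousAt.mul (hU x hx).continuousAt.star).continuousWithinAt
  · have hd := (hU x (Ico_subset_Icc_self hx)).mul (hU x (Ico_subset_Icc_self hx)).star
    rw [star_mul, hh x (Ico_subset_Icc_self hx), neg_mul, mul_neg, ← mul_assoc,
      add_neg_cancel] at hd
    exact hd.hasDerivWithinAt

theorem seminorm_le_add_integral_of_hasDerivAt {A : Type*} [NormedRing A] [NormedAlgebra ℝ A]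
    [CompleteSpace A] (p : Seminorm ℝ A) (hpc : Continuous p) (hp_one : p 1 = 0) {C c T : ℝ}
    (hC : 0 ≤ C) (hp_mul : ∀ a b, p (a * b) ≤ C * (‖a‖ * p b + ‖b‖ * p a)) {h U : ℝ → A}
    (hh : ContinuousOn h (Icc 0 T)) (hloc : ∀ t ∈ Icc 0 T, p (h t) ≤ c)
    (hU_norm : ∀ t ∈ Icc 0 T, ‖U t‖ ≤ 1) (hU₀ : U 0 = 1)
    (hU : ∀ t ∈ Icc 0 T, HasDerivAt U (U t * h t) t) :
    ∀ s ∈ Icc 0 T, p (U s) ≤ C * c * s + ∫ t in 0..s, C * ‖h t‖ * p (U t) := by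
  intro s hs
  have hsub : Icc 0 s ⊆ Icc 0 T := Icc_subset_Icc_right hs.2
  have hUc : ContinuousOn U (Icc 0 s) := fun t ht =>
    (hU t (hsub ht)).continuousAt.continuousWithinAt
  have hUh : ContinuousOn (fun t => U t * h t) (Icc 0 s) := hUc.mul (hh.mono hsub)
  have hk : ContinuousOn (fun t => C * ‖h t‖ * p (U t)) (Icc 0 s) :=
    (continuousOn_const.mul (hh.mono hsub).norm).mul (hpc.comp_continuousOn hUc)
  have hFTC : U s = 1 + ∫ t in 0..s, U t * h t := by
    rw [intervalIntegral.integral_eq_sub_of_hasDerivAt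
      (fun t ht => hU t (hsub (uIcc_of_le hs.1 ▸ ht))) (hUh.intervalIntegrable_of_Icc hs.1), hU₀,
      add_sub_cancel]
  calc p (U s) ≤ p 1 + p (∫ t in 0..s, U t * h t) := hFTC ▸ map_add_le_add p _ _
    _ ≤ ∫ t in 0..s, p (U t * h t) := by
        rw [hp_one, zero_add]
        exact p.map_intervalIntegral_le hpc hs.1 (hUh.intervalIntegrable_of_Icc hs.1)
          ((hpc.comp_continuousOn hUh).intervalIntegrable_of_Icc hs.1)
    _ ≤ ∫ t in 0..s, (C * c + C * ‖h t‖ * p (U t)) := by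
        refine intervalIntegral.integral_mono_on hs.1
          ((hpc.comp_continuousOn hUh).intervalIntegrable_of_Icc hs.1)
          ((continuousOn_const.add hk).intervalIntegrable_of_Icc hs.1) fun t ht => ?_
        have hUh_le : ‖U t‖ * p (h t) ≤ c :=
          (mul_le_of_le_one_left (apply_nonneg p _) (hU_norm t (hsub ht))).trans
            (hloc t (hsub ht))
        calc p (U t * h t) ≤ C * (‖U t‖ * p (h t) + ‖h t‖ * p (U t)) := hp_mul _ _
          _ ≤ C * (c + ‖h t‖ * p (U t)) := by gcongr
          _ = C * c + C * ‖h t‖ * p (U t) := by ring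
    _ = C * c * s + ∫ t in 0..s, C * ‖h t‖ * p (U t) := by
        rw [intervalIntegral.integral_add intervalIntegrable_const
          (hk.intervalIntegrable_of_Icc hs.1), intervalIntegral.integral_const, smul_eq_mul,
          sub_zero, mul_comm s]

theorem localization_of_generated_unitary_general
    {A : Type*} [NormedRing A] [StarRing A] [CStarRing A]
    [NormedAlgebra ℂ A] [StarModule ℂ A] [CompleteSpace A]
    (F : ℤ → A → ℝ → ℝ)
    (hF_add : ∀ j (a b : A) r, F j (a + b) r ≤ F j a r + F j b r)
    (hF_smul : ∀ j (c : ℂ) (a : A) r, F j (c • a) r = ‖c‖ * F j a r)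
    (hF_one : ∀ j r, F j (1 : A) r = 0)
    (hF_norm : ∀ j a r, F j a r ≤ ‖a‖)
    (hF_mul : ∀ j (a b : A) r,
      F j (a * b) r ≤ (3/2) * (‖a‖ * F j b r + ‖b‖ * F j a r))
    (h : ℝ → A) (hcont : ContinuousOn h (Set.Icc 0 1))
    (hanti : ∀ t ∈ Set.Icc (0:ℝ) 1, star (h t) = - h t)
    (f : ℝ → ℝ)
    (hloc : ∀ t ∈ Set.Icc (0:ℝ) 1, ∀ r ≥ (0:ℝ), F 0 (h t) r ≤ f r)
    (M : ℝ) (hM : ∀ t ∈ Set.Icc (0:ℝ) 1, ‖h t‖ ≤ M)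
    (U : ℝ → A) (hU0 : U 0 = 1)
    (hUode : ∀ s ∈ Set.Icc (0:ℝ) 1, HasDerivAt U (U s * h s) s) :
    ∀ s ∈ Set.Icc (0:ℝ) 1, ∀ r ≥ (0:ℝ),
      F 0 (U s) r ≤ (3 * s / 2) * f r *
          Real.exp ((3/2) * ∫ t in (0:ℝ)..s, ‖h t‖) ∧
      (3 * s / 2) * f r * Real.exp ((3/2) * ∫ t in (0:ℝ)..s, ‖h t‖)
        ≤ (3/2) * f r * Real.exp ((3/2) * M) := by
  intro s hs r hr
  let p : Seminorm ℝ A := Seminorm.of (F 0 · r) (hF_add 0 · · r) fun c a => by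
    rw [← Complex.coe_smul, hF_smul, Complex.norm_real]
  have hpc : Continuous p := Seminorm.continuous_of_le (q := normSeminorm ℝ A) continuous_norm
    (hF_norm 0 · r)
  have hUc : ContinuousOn U (Icc 0 s) := fun t ht =>
    (hUode t ⟨ht.1, ht.2.trans hs.2⟩).continuousAt.continuousWithinAt
  have hfr : 0 ≤ f r := (apply_nonneg p (h 0)).trans (hloc 0 ⟨le_rfl, zero_le_one⟩ r hr)
  have hU_norm : ∀ t ∈ Icc (0 : ℝ) 1, ‖U t‖ ≤ 1 := fun t ht =>
    CStarRing.norm_le_one_of_mul_star_self_eq_one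
      (mul_star_self_eq_one_of_hasDerivAt hanti hU0 hUode t ht)
  have hint := seminorm_le_add_integral_of_hasDerivAt p hpc (hF_one 0 r)
    (by norm_num) (hF_mul 0 · · r) hcont (fun t ht => hloc t ht r hr) hU_norm hU0 hUode
  have hgron := le_mul_exp_integral_of_le_add_integral (g := fun t => p (U t))
    (k := fun t => 3 / 2 * ‖h t‖) (c := 3 / 2 * f r) hs.1 (by positivity)
    (hpc.comp_continuousOn hUc)
    ((continuousOn_const.mul hcont.norm).mono (Icc_subset_Icc_right hs.2))
    (fun t _ => by positivity) fun t ht => by simpa using hint t ⟨ht.1, ht.2.trans hs.2⟩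
  have hM₀ : 0 ≤ M := (norm_nonneg _).trans (hM 0 ⟨le_rfl, zero_le_one⟩)
  have hnorm_int : ∫ t in (0 : ℝ)..s, ‖h t‖ ≤ M * s := by
    simpa using intervalIntegral.integral_norm_le_mul hs.1 fun t ht =>
      hM t ⟨ht.1.le, ht.2.trans hs.2⟩
  constructor
  · rw [intervalIntegral.integral_const_mul] at hgron
    exact hgron.trans_eq (by ring)
  · gcongr
    · linarith [hs.2]
    · exact hnorm_int.trans (mul_le_of_le_one_right hM₀ hs.2)

/-- Localization bound for the unitary generated by a localized anti-self-adjoint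
generator: if `F j (·, r)` is a family of seminorms with `F j 1 r = 0`,
`F j a r ≤ ‖a‖`, `F j (ab) r ≤ (3/2)(‖a‖ F j b r + ‖b‖ F j a r)`, the generator
h(t) satisfies `F 0 (h t) r ≤ f r`, and U solves dU/ds = U h with U 0 = 1, then
`F 0 (U s) r ≤ (3s/2) f r exp((3/2)∫₀ˢ ‖h‖) ≤ (3/2) f r exp((3/2) M)` where M
bounds `‖h t‖`. -/
theorem localization_of_generated_unitary
    {A : Type*} [NormedRing A] [StarRing A] [CStarRing A]
    [NormedAlgebra ℂ A] [StarModule ℂ A] [CompleteSpace A]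
    (F : ℤ → A → ℝ → ℝ)
    (hF_nonneg : ∀ j a r, 0 ≤ F j a r)
    (hF_add : ∀ j (a b : A) r, F j (a + b) r ≤ F j a r + F j b r)
    (hF_smul : ∀ j (c : ℂ) (a : A) r, F j (c • a) r = ‖c‖ * F j a r)
    (hF_one : ∀ j r, F j (1 : A) r = 0)
    (hF_norm : ∀ j a r, F j a r ≤ ‖a‖)
    (hF_mul : ∀ j (a b : A) r,
      F j (a * b) r ≤ (3/2) * (‖a‖ * F j b r + ‖b‖ * F j a r))
    (h : ℝ → A) (hcont : ContinuousOn h (Set.Icc 0 1))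
    (hanti : ∀ t ∈ Set.Icc (0:ℝ) 1, star (h t) = - h t)
    (f : ℝ → ℝ)
    (hloc : ∀ t ∈ Set.Icc (0:ℝ) 1, ∀ r ≥ (0:ℝ), F 0 (h t) r ≤ f r)
    (M : ℝ) (hM : ∀ t ∈ Set.Icc (0:ℝ) 1, ‖h t‖ ≤ M)
    (U : ℝ → A) (hU0 : U 0 = 1)
    (hUode : ∀ s ∈ Set.Icc (0:ℝ) 1, HasDerivAt U (U s * h s) s) :
    ∀ s ∈ Set.Icc (0:ℝ) 1, ∀ r ≥ (0:ℝ),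
      F 0 (U s) r ≤ (3 * s / 2) * f r *
          Real.exp ((3/2) * ∫ t in (0:ℝ)..s, ‖h t‖) ∧
      (3 * s / 2) * f r * Real.exp ((3/2) * ∫ t in (0:ℝ)..s, ‖h t‖)
        ≤ (3/2) * f r * Real.exp ((3/2) * M) :=
  localization_of_generated_unitary_general F hF_add hF_smul hF_one hF_norm hF_mul h hcont hanti f
    hloc M hM U hU0 hUode
end

section
/- Let G be a group with a nonzero class in H²(G, U(1)) realized by a projective unitary action α : G → PU(ℋ). Then there is no unit vector ψ ∈ ℋ whose induced state on B(ℋ) is G-invariant, i.e. no unit vector such that for some (equivalently any) lift 𝒱 : G → U(ℋ), the vector state A ↦ ⟨ψ, Aψ⟩ satisfies ⟨ψ, 𝒱(g)A𝒱(g)*ψ⟩ = ⟨ψ, Aψ⟩ for all A ∈ B(ℋ) and g ∈ G. -/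
noncomputable section

variable (H : Type*) [NormedAddCommGroup H] [InnerProductSpace ℂ H] [CompleteSpace H]

/-- The central subgroup of scalar unitaries inside the unitary group of B(H). -/
def scalarUnitary : Subgroup (unitary (H →L[ℂ] H)) where
  carrier := {u | ∃ c : ℂ, (u : H →L[ℂ] H) = c • 1}
  one_mem' := ⟨1, by rw [OneMemClass.coe_one, one_smul]⟩
  mul_mem' := by
    rintro u v ⟨c, hc⟩ ⟨d, hd⟩
    exact ⟨c * d, by rw [MulMemClass.coe_mul, hc, hd, smul_mul_smul_comm, one_mul]⟩
  inv_mem' := by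
    rintro u ⟨c, hc⟩
    exact ⟨star c, by
      rw [← Unitary.star_eq_inv, Unitary.coe_star, hc, star_smul, star_one]⟩

instance scalarUnitary_normal : (scalarUnitary H).Normal := by
  constructor
  rintro u ⟨c, hc⟩ g
  refine ⟨c, ?_⟩
  rw [MulMemClass.coe_mul, MulMemClass.coe_mul, ← Unitary.star_eq_inv,
    Unitary.coe_star, hc, mul_smul_comm, mul_one, smul_mul_assoc,
    Unitary.mul_star_self_of_mem g.2]

/-- The projective unitary group PU(H) = U(H)/U(1). -/
def PU := unitary (H →L[ℂ] H) ⧸ scalarUnitary H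

instance : Group (PU H) := QuotientGroup.Quotient.group (scalarUnitary H)

/-- The quotient map U(H) → PU(H). -/
def toPU : unitary (H →L[ℂ] H) →* PU H := QuotientGroup.mk' (scalarUnitary H)

/-!
A `G`-invariant vector state forces each `𝒱(g)` to fix the ray through `ψ`: testing invariance
on the projection onto `ψ` gives `|⟨ψ, 𝒱(g)ψ⟩| = 1`, the equality case of Cauchy–Schwarz. The
eigenvalues `φ(g) = ⟨ψ, 𝒱(g)ψ⟩` then satisfy `φ(g)φ(h) = μ(g,h)φ(gh)`, so `μ = δφ` is a
coboundary. -/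

open scoped InnerProductSpace

section InvariantVectorState

variable {𝕜 E : Type*} [RCLike 𝕜] [NormedAddCommGroup E] [InnerProductSpace 𝕜 E]

theorem eq_inner_smul_of_norm_inner_eq_norm {x y : E} (hx : ‖x‖ = 1) (h : ‖⟪x, y⟫_𝕜‖ = ‖y‖) :
    y = ⟪x, y⟫_𝕜 • x := by
  have hx0 : x ≠ 0 := norm_ne_zero_iff.mp (by simp [hx])
  have := ((norm_inner_eq_norm_tfae 𝕜 x y).out 0 1).mp (by rw [h, hx, one_mul])
  simpa [hx0, hx] using this

variable [CompleteSpace E]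

theorem inner_conj_rankOne_self (ψ : E) (U : E →L[𝕜] E) :
    ⟪ψ, (U * (innerSL 𝕜 ψ).smulRight ψ * star U) ψ⟫_𝕜 = (‖⟪ψ, U ψ⟫_𝕜‖ : 𝕜) ^ 2 := by
  simp only [mul_apply_eq_comp, ContinuousLinearMap.smulRight_apply,
    innerSL_apply_apply, map_smul, inner_smul_right, ContinuousLinearMap.star_eq_adjoint,
    ContinuousLinearMap.adjoint_inner_right]
  rw [← inner_conj_symm (U ψ) ψ, RCLike.conj_mul]

theorem norm_inner_apply_eq_one_of_forall_inner_conj_eq {ψ : E} (hψ : ‖ψ‖ = 1) {U : E →L[𝕜] E}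
    (hU : ∀ A : E →L[𝕜] E, ⟪ψ, (U * A * star U) ψ⟫_𝕜 = ⟪ψ, A ψ⟫_𝕜) :
    ‖⟪ψ, U ψ⟫_𝕜‖ = 1 := by
  have hP := hU ((innerSL 𝕜 ψ).smulRight ψ)
  rw [inner_conj_rankOne_self] at hP
  simp only [ContinuousLinearMap.smulRight_apply, innerSL_apply_apply, inner_smul_right,
    inner_self_eq_norm_sq_to_K, hψ] at hP
  norm_cast at hP
  exact (pow_eq_one_iff_of_nonneg (norm_nonneg _) two_ne_zero).mp (by simpa using hP)

end InvariantVectorState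

theorem eigenvalue_mul_eigenvalue_eq {𝕜 E G : Type*} [NormedField 𝕜] [NormedAddCommGroup E]
    [NormedSpace 𝕜 E] [Mul G] {V : G → E →L[𝕜] E} {μ : G → G → 𝕜}
    (hμ : ∀ g h, V g * V h = μ g h • V (g * h)) {φ : G → 𝕜} {ψ : E} (hψ : ψ ≠ 0)
    (hφ : ∀ g, V g ψ = φ g • ψ) (g h : G) :
    φ g * φ h = μ g h * φ (g * h) := by
  have := congrArg (· ψ) (hμ g h)
  simp only [mul_apply_eq_comp, smul_apply, hφ, map_smul, smul_smul] at this
  exact smul_left_injective 𝕜 hψ (by simpa [mul_comm] using this)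

theorem no_invariant_vector_state_of_anomalous {G : Type*} [Group G]
    (V : G → unitary (H →L[ℂ] H))
    (μ : G → G → ℂ)
    (hμ : ∀ g h : G,
      ((V g : H →L[ℂ] H)) * ((V h : H →L[ℂ] H))
        = μ g h • ((V (g * h) : H →L[ℂ] H)))
    (hnontrivial : ¬ ∃ φ : G → ℂ, (∀ g : G, ‖φ g‖ = 1) ∧
      ∀ g h : G, μ g h = φ g * φ h * (φ (g * h))⁻¹) :
    ¬ ∃ ψ : H, ‖ψ‖ = 1 ∧
      ∀ (g : G) (A : H →L[ℂ] H),
        (inner ℂ ψ ((((V g : H →L[ℂ] H)) * A * star ((V g : H →L[ℂ] H))) ψ) : ℂ)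
          = inner ℂ ψ (A ψ) := by
  rintro ⟨ψ, hψ, hinv⟩
  set φ : G → ℂ := fun g => ⟪ψ, (V g : H →L[ℂ] H) ψ⟫_ℂ
  have hφ : ∀ g, ‖φ g‖ = 1 := fun g => norm_inner_apply_eq_one_of_forall_inner_conj_eq hψ (hinv g)
  have heig : ∀ g, (V g : H →L[ℂ] H) ψ = φ g • ψ := fun g =>
    eq_inner_smul_of_norm_inner_eq_norm hψ <| by
      rw [hφ g, (V g).val.norm_map_of_mem_unitary (V g).2, hψ]
  have hψ0 : ψ ≠ 0 := norm_ne_zero_iff.mp (by simp [hψ])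
  refine hnontrivial ⟨φ, hφ, fun g h => ?_⟩
  have hφ0 : φ (g * h) ≠ 0 := norm_ne_zero_iff.mp (by simp [hφ])
  rw [eigenvalue_mul_eigenvalue_eq hμ hψ0 heig, mul_inv_cancel_right₀ hφ0]
end
end

section
/- Let G be a group acting on a group U by automorphisms β̄ : G → Aut(U) and suppose G = G₀ × ℤ. Let ω : G³ → U(1) be a 3-cocycle on G with values in U(1) (trivial action). Define (ω/[1])(g,g') := ω(e,1;g,0;g',0) · ω(g,0;g',0;e,1) · ω(g,0;e,1;g',0)⁻¹ for g,g' ∈ G₀, where elements of G are written (g,n). Then ω/[1] is a 2-cocycle on G₀ with values in U(1). -/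
/-- Additive version: if `f` is a 3-cocycle (written additively) and `t` is central,
then the slant product `(a,b) ↦ f t a b + f a b t - f a t b` is a 2-cocycle. -/
lemma slant_aux {G : Type*} [Group G] {A : Type*} [AddCommGroup A]
    (f : G → G → G → A)
    (hf : ∀ g₁ g₂ g₃ g₄ : G,
      f g₂ g₃ g₄ + f g₁ (g₂ * g₃) g₄ + f g₁ g₂ g₃
        = f (g₁ * g₂) g₃ g₄ + f g₁ g₂ (g₃ * g₄))
    (t : G) (ht : ∀ g, t * g = g * t) (a b c : G) :
    (f t b c + f b c t - f b t c) + (f t a (b * c) + f a (b * c) t - f a t (b * c))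
      = (f t (a * b) c + f (a * b) c t - f (a * b) t c)
        + (f t a b + f a b t - f a t b) := by
  have h1 := hf a b c t
  have h2 := hf a b t c
  have h3 := hf a t b c
  have h4 := hf t a b c
  rw [ht a] at h4
  rw [ht b] at h3
  rw [ht c] at h2
  rw [← sub_eq_zero]
  calc ((f t b c + f b c t - f b t c) + (f t a (b * c) + f a (b * c) t - f a t (b * c)))
      - ((f t (a * b) c + f (a * b) c t - f (a * b) t c)
        + (f t a b + f a b t - f a t b))
      = ((f b c t + f a (b * c) t + f a b c) - (f (a * b) c t + f a b (c * t)))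
        - ((f b t c + f a (b * t) c + f a b t) - (f (a * b) t c + f a b (c * t)))
        + ((f t b c + f a (b * t) c + f a t b) - (f (a * t) b c + f a t (b * c)))
        - ((f a b c + f t (a * b) c + f t a b) - (f (a * t) b c + f t a (b * c))) := by
          abel
    _ = 0 := by rw [h1, h2, h3, h4]; abel

/-- The slant product with the generator of H₁(ℤ,ℤ) maps a multiplicative
3-cocycle ω on G₀ × ℤ (with values in an abelian group, e.g. U(1)) to a
2-cocycle (ω/[1])(g,g') = ω(e,1;g,0;g',0)·ω(g,0;g',0;e,1)·ω(g,0;e,1;g',0)⁻¹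
on G₀. -/
theorem slant_product_of_cocycle_is_cocycle
    {G₀ : Type*} [Group G₀] {M : Type*} [CommGroup M]
    (ω : (G₀ × Multiplicative ℤ) → (G₀ × Multiplicative ℤ) →
         (G₀ × Multiplicative ℤ) → M)
    (hω : ∀ g₁ g₂ g₃ g₄ : G₀ × Multiplicative ℤ,
      ω g₂ g₃ g₄ * ω g₁ (g₂ * g₃) g₄ * ω g₁ g₂ g₃
        = ω (g₁ * g₂) g₃ g₄ * ω g₁ g₂ (g₃ * g₄))
    (slant : G₀ → G₀ → M)
    (hslant : ∀ g g' : G₀,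
      slant g g'
        = ω (1, Multiplicative.ofAdd 1) (g, 1) (g', 1)
          * ω (g, 1) (g', 1) (1, Multiplicative.ofAdd 1)
          * (ω (g, 1) (1, Multiplicative.ofAdd 1) (g', 1))⁻¹) :
    ∀ g₁ g₂ g₃ : G₀,
      slant g₂ g₃ * slant g₁ (g₂ * g₃) = slant (g₁ * g₂) g₃ * slant g₁ g₂ := by
  intro g₁ g₂ g₃
  set t : G₀ × Multiplicative ℤ := (1, Multiplicative.ofAdd 1) with ht_def
  have ht : ∀ g : G₀ × Multiplicative ℤ, t * g = g * t := by
    intro g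
    simp [ht_def, Prod.ext_iff, mul_comm]
  have key := slant_aux (A := Additive M)
    (f := fun x y z => Additive.ofMul (ω x y z)) hω t ht (g₁, 1) (g₂, 1) (g₃, 1)
  simp only [Prod.mk_mul_mk, mul_one, sub_eq_add_neg, ← ofMul_inv, ← ofMul_mul,
    EmbeddingLike.apply_eq_iff_eq] at key
  rw [hslant, hslant, hslant, hslant]
  exact key
end

section
/- Let A be a C*-algebra with GNS triple (ℋ_ψ, π_ψ, |ψ⟩) for a state ψ, and let F be a *-preserving derivation on a dense *-subalgebra D with F(D) ⊆ D and ψ(F(a)) = 0 for all a ∈ D. Then the assignment F̂(π_ψ(a)|ψ⟩) := π_ψ(F(a))|ψ⟩ gives a well-defined linear operator on the subspace D_ψ := π_ψ(D)|ψ⟩, which satisfies F̂|ψ⟩ = 0 and the commutation relation F̂ π_ψ(b) v − π_ψ(b) F̂ v = π_ψ(F(b)) v for all b ∈ D and v ∈ D_ψ. Moreover if F is anti-self-adjoint (F(a*) = F(a)*, ψ(F(a)) = 0 ∀a, and ψ(F(a)·b) = −ψ(a·F(b)) follows) then F̂ is skew-symmetric on D_ψ: ⟨F̂u, v⟩ =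 −⟨u, F̂v⟩. -/
open scoped ComplexOrder

/-!
Everything reduces to the identity `ψ (star (F a) * b) = - ψ (star a * F b)` on `D`, obtained by
applying `ψ ∘ F = 0` to the Leibniz expansion of `F (star a * b)`. Through the GNS formula
`⟪π a ξ, π b ξ⟫ = ψ (star a * b)` it is exactly the skew-symmetry of `F̂`, and skew-symmetry gives
well-definedness: if `π c ξ = 0` then `‖π (F c) ξ‖² = -⟪π c ξ, π (F (F c)) ξ⟫ = 0`.
-/

section Derivation

variable {A : Type*} [Ring A] [StarRing A] [Algebra ℂ A] [StarModule ℂ A]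
  {D : StarSubalgebra ℂ A} {F : A →ₗ[ℂ] A} {ψ : A →ₗ[ℂ] ℂ}

theorem map_star_derivation_mul_eq_neg
    (hleibniz : ∀ a ∈ D, ∀ b ∈ D, F (a * b) = F a * b + a * F b)
    (hstar : ∀ a ∈ D, F (star a) = star (F a))
    (hnoexcite : ∀ a ∈ D, ψ (F a) = 0) {a b : A} (ha : a ∈ D) (hb : b ∈ D) :
    ψ (star (F a) * b) = - ψ (star a * F b) := by
  have h := hnoexcite (star a * b) (mul_mem (star_mem ha) hb)
  rw [hleibniz _ (star_mem ha) b hb, map_add, hstar a ha] at h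
  exact eq_neg_of_add_eq_zero_left h

end Derivation

section GNS

variable {A : Type*} [Ring A] [StarRing A] [Algebra ℂ A]
  {H : Type*} [NormedAddCommGroup H] [InnerProductSpace ℂ H] [CompleteSpace H]
  (π : A →⋆ₐ[ℂ] (H →L[ℂ] H)) (ξ : H)

theorem inner_apply_apply_eq_inner_apply_star_mul (a b : A) :
    inner ℂ (π a ξ) (π b ξ) = inner ℂ ξ (π (star a * b) ξ) := by
  rw [map_mul, map_star, ContinuousLinearMap.star_eq_adjoint, mul_apply_eq_comp,
    ContinuousLinearMap.adjoint_inner_right]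

variable [StarModule ℂ A] {π ξ} {ψ : A →ₗ[ℂ] ℂ} (hGNS : ∀ a : A, ψ a = inner ℂ ξ (π a ξ))
  {D : StarSubalgebra ℂ A} {F : A →ₗ[ℂ] A}
  (hleibniz : ∀ a ∈ D, ∀ b ∈ D, F (a * b) = F a * b + a * F b)
  (hstar : ∀ a ∈ D, F (star a) = star (F a))
  (hnoexcite : ∀ a ∈ D, ψ (F a) = 0)
include hGNS hleibniz hstar hnoexcite

theorem inner_apply_derivation_eq_neg {a b : A} (ha : a ∈ D) (hb : b ∈ D) :
    inner ℂ (π (F a) ξ) (π b ξ) = - inner ℂ (π a ξ) (π (F b) ξ) := by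
  rw [inner_apply_apply_eq_inner_apply_star_mul, inner_apply_apply_eq_inner_apply_star_mul,
    ← hGNS, ← hGNS, map_star_derivation_mul_eq_neg hleibniz hstar hnoexcite ha hb]

theorem apply_derivation_eq_zero_of_apply_eq_zero (hinv : ∀ a ∈ D, F a ∈ D) {c : A} (hc : c ∈ D)
    (hcξ : π c ξ = 0) : π (F c) ξ = 0 := by
  rw [← inner_self_eq_zero (𝕜 := ℂ),
    inner_apply_derivation_eq_neg hGNS hleibniz hstar hnoexcite hc (hinv c hc),
    hcξ, inner_zero_left, neg_zero]

end GNS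

theorem gns_derivation_operator_general
    {A : Type*} [NormedRing A] [StarRing A]
    [NormedAlgebra ℂ A] [StarModule ℂ A]
    {H : Type*} [NormedAddCommGroup H] [InnerProductSpace ℂ H] [CompleteSpace H]
    (ψ : A →ₗ[ℂ] ℂ)
    (π : A →⋆ₐ[ℂ] (H →L[ℂ] H)) (ξ : H)
    (hGNS : ∀ a : A, ψ a = inner ℂ ξ (π a ξ))
    (D : StarSubalgebra ℂ A)
    (F : A →ₗ[ℂ] A)
    (hleibniz : ∀ a ∈ D, ∀ b ∈ D, F (a * b) = F a * b + a * F b)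
    (hstar : ∀ a ∈ D, F (star a) = star (F a))
    (hinv : ∀ a ∈ D, F a ∈ D)
    (hnoexcite : ∀ a ∈ D, ψ (F a) = 0) :
    -- well-definedness of F̂ on D_ψ
    (∀ a ∈ D, ∀ a' ∈ D, π a ξ = π a' ξ → π (F a) ξ = π (F a') ξ) ∧
    -- F̂ annihilates the GNS vector ξ = π(1)ξ
    π (F 1) ξ = 0 ∧
    -- commutation relation F̂ π(b) v − π(b) F̂ v = π(F(b)) v for v = π(a)ξ
    (∀ a ∈ D, ∀ b ∈ D,
      π (F (b * a)) ξ - π b (π (F a) ξ) = π (F b) (π a ξ)) ∧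
    -- skew-symmetry of F̂ on D_ψ
    (∀ a ∈ D, ∀ b ∈ D,
      (inner ℂ (π (F a) ξ) (π b ξ) : ℂ) = - inner ℂ (π a ξ) (π (F b) ξ)) := by
  refine ⟨fun a ha a' ha' heq => ?_, ?_, fun a ha b hb => ?_,
    fun a ha b hb => inner_apply_derivation_eq_neg hGNS hleibniz hstar hnoexcite ha hb⟩
  · have hdiff := apply_derivation_eq_zero_of_apply_eq_zero hGNS hleibniz hstar hnoexcite hinv
      (D.sub_mem ha ha') (by rw [map_sub, sub_apply, heq, sub_self])
    rwa [map_sub, map_sub, sub_apply, sub_eq_zero] at hdiff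
  · have hF1 : F 1 = 0 := by simpa using hleibniz 1 D.one_mem 1 D.one_mem
    rw [hF1, map_zero, zero_apply]
  · rw [hleibniz b hb a ha, map_add, map_mul, map_mul, add_apply,
      mul_apply_eq_comp, mul_apply_eq_comp, add_sub_cancel_right]

/-- In the GNS representation (ℋ, π, ξ) of a state ψ, a derivation F on a dense
*-subalgebra D that does not excite ψ induces a well-defined operator
F̂(π(a)ξ) := π(F(a))ξ on D_ψ = π(D)ξ, which annihilates ξ, satisfies the
commutation relation F̂π(b)v − π(b)F̂v = π(F(b))v on D_ψ, and is skew-symmetric. -/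
theorem gns_derivation_operator
    {A : Type*} [NormedRing A] [StarRing A] [CStarRing A]
    [NormedAlgebra ℂ A] [StarModule ℂ A] [CompleteSpace A]
    {H : Type*} [NormedAddCommGroup H] [InnerProductSpace ℂ H] [CompleteSpace H]
    (ψ : A →ₗ[ℂ] ℂ)
    (hψpos : ∀ a : A, 0 ≤ ψ (star a * a))
    (hψone : ψ 1 = 1)
    (π : A →⋆ₐ[ℂ] (H →L[ℂ] H)) (ξ : H)
    (hcyclic : Dense (Set.range fun a : A => π a ξ))
    (hGNS : ∀ a : A, ψ a = inner ℂ ξ (π a ξ))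
    (D : StarSubalgebra ℂ A) (hdense : Dense (D : Set A))
    (F : A →ₗ[ℂ] A)
    (hleibniz : ∀ a ∈ D, ∀ b ∈ D, F (a * b) = F a * b + a * F b)
    (hstar : ∀ a ∈ D, F (star a) = star (F a))
    (hinv : ∀ a ∈ D, F a ∈ D)
    (hnoexcite : ∀ a ∈ D, ψ (F a) = 0) :
    -- well-definedness of F̂ on D_ψ
    (∀ a ∈ D, ∀ a' ∈ D, π a ξ = π a' ξ → π (F a) ξ = π (F a') ξ) ∧
    -- F̂ annihilates the GNS vector ξ = π(1)ξ
    π (F 1) ξ = 0 ∧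
    -- commutation relation F̂ π(b) v − π(b) F̂ v = π(F(b)) v for v = π(a)ξ
    (∀ a ∈ D, ∀ b ∈ D,
      π (F (b * a)) ξ - π b (π (F a) ξ) = π (F b) (π a ξ)) ∧
    -- skew-symmetry of F̂ on D_ψ
    (∀ a ∈ D, ∀ b ∈ D,
      (inner ℂ (π (F a) ξ) (π b ξ) : ℂ) = - inner ℂ (π a ξ) (π (F b) ξ)) :=
  gns_derivation_operator_general ψ π ξ hGNS D F hleibniz hstar hinv hnoexcite
end
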